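/- arXiv:2603.18289 — 6 statements merged into one kernel-verified Lean document; each statement's English description precedes it below -/
import Mathlib

section
/- Let G be a connected graph with at least 3 vertices, and let c be a locally-optimal coloring of G. Then every color used by c is assigned to at least three vertices. -/
/-!
Every vertex `x` of a connected graph on at least two vertices has a neighbour, and then local
optimality forces a neighbour of colour `c x`. If some colour class had at most two vertices, a
vertex `v` of it and such a neighbour `w` would have no further neighbour of their own colour;
local optimality then rules out neighbours of any other colour as well, so `{v, w}` is closed
under adjacency and, by connectedness, is the whole vertex set.
-/

/-- A locally-optimal `k`-coloring: each vertex's own color appears strictly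
more often among its neighbors than any other color (plurality). -/
def IsLocOpt {V : Type*} {k : ℕ} (G : SimpleGraph V) (c : V → Fin k) : Prop :=
  ∀ v : V, ∀ d : Fin k, d ≠ c v →
    Nat.card {w : V // G.Adj v w ∧ c w = d} < Nat.card {w : V // G.Adj v w ∧ c w = c v}

/-- The number of locally-optimal `k`-colorings of `G`. -/
noncomputable def LOcount {V : Type*} (G : SimpleGraph V) (k : ℕ) : ℕ :=
  Nat.card {c : V → Fin k // IsLocOpt G c}

namespace SimpleGraph

variable {V : Type*} {G : SimpleGraph V}

theorem Connected.eq_univ_of_adj_mem (hG : G.Connected) {s : Set V} (hs : s.Nonempty)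
    (h : ∀ ⦃a b⦄, a ∈ s → G.Adj a b → b ∈ s) : s = Set.univ := by
  refine Set.eq_univ_of_forall fun b => by_contra fun hb => ?_
  obtain ⟨a, ha⟩ := hs
  obtain ⟨p⟩ := hG a b
  obtain ⟨d, -, hd₁, hd₂⟩ := p.exists_boundary_dart s ha hb
  exact hd₂ (h hd₁ d.adj)

theorem card_adj_color_eq_lt_card_color_eq [Finite V] {α : Type*} (G : SimpleGraph V)
    (c : V → α) (x : V) :
    Nat.card {w : V // G.Adj x w ∧ c w = c x} < Nat.card {u : V // c u = c x} :=
  Set.ncard_lt_ncard (ssubset_of_subset_not_superset (fun _ hw => hw.2)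
    fun h => G.irrefl (h (rfl : c x = c x)).1)

end SimpleGraph

namespace IsLocOpt

variable {V : Type*} {k : ℕ} {G : SimpleGraph V} {c : V → Fin k}

theorem exists_adj_color_eq (hc : IsLocOpt G c) {x y : V} (hxy : G.Adj x y) :
    ∃ w, G.Adj x w ∧ c w = c x := by
  by_cases hy : c y = c x
  · exact ⟨y, hxy, hy⟩
  · have hpos : 0 < Nat.card {w : V // G.Adj x w ∧ c w = c x} :=
      (Nat.zero_le _).trans_lt (hc x (c y) hy)
    obtain ⟨⟨w, hw⟩⟩ := (Nat.card_pos_iff.mp hpos).1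
    exact ⟨w, hw⟩

theorem eq_of_adj_of_card_le_one [Finite V] (hc : IsLocOpt G c) {x y z : V} (hxy : G.Adj x y)
    (hy : c y = c x) (hx : Nat.card {w : V // G.Adj x w ∧ c w = c x} ≤ 1) (hxz : G.Adj x z) :
    z = y := by
  by_cases hz : c z = c x
  · have := Finite.card_le_one_iff_subsingleton.mp hx
    exact congrArg Subtype.val
      (Subsingleton.elim (⟨z, hxz, hz⟩ : {w : V // G.Adj x w ∧ c w = c x}) ⟨y, hxy, hy⟩)
  · have hlt := hc x (c z) hz
    have hpos : 0 < Nat.card {w : V // G.Adj x w ∧ c w = c z} :=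
      Nat.card_pos_iff.mpr ⟨⟨⟨z, hxz, rfl⟩⟩, inferInstance⟩
    omega

end IsLocOpt

/-- In a connected graph with at least 3 vertices, every color used by a
locally-optimal coloring is assigned to at least three vertices. -/
theorem stmt3 {V : Type*} [Fintype V] (G : SimpleGraph V) {k : ℕ}
    (hconn : G.Connected) (hn : 3 ≤ Fintype.card V)
    (c : V → Fin k) (hc : IsLocOpt G c) (i : Fin k) (v : V) (hv : c v = i) :
    3 ≤ Nat.card {u : V // c u = i} := by
  subst hv
  by_contra! hsmall
  have : Nontrivial V := Fintype.one_lt_card_iff_nontrivial.mp (by omega)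
  obtain ⟨y, hvy⟩ := hconn.preconnected.exists_adj_of_nontrivial v
  obtain ⟨w, hvw, hw⟩ := hc.exists_adj_color_eq hvy
  have hv₁ : Nat.card {u : V // G.Adj v u ∧ c u = c v} ≤ 1 := by
    have := G.card_adj_color_eq_lt_card_color_eq c v
    omega
  have hw₁ : Nat.card {u : V // G.Adj w u ∧ c u = c w} ≤ 1 := by
    have := G.card_adj_color_eq_lt_card_color_eq c w
    rw [hw] at this ⊢
    omega
  have hpair : ({v, w} : Set V) = Set.univ := by
    refine hconn.eq_univ_of_adj_mem (Set.insert_nonempty _ _) ?_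
    rintro a b (rfl | rfl) hab
    · exact Or.inr (hc.eq_of_adj_of_card_le_one hvw hw hv₁ hab)
    · exact Or.inl (hc.eq_of_adj_of_card_le_one hvw.symm hw.symm hw₁ hab)
  have hcard : Fintype.card V ≤ 2 := by
    rw [← Nat.card_eq_fintype_card, ← Set.ncard_univ, ← hpair]
    exact (Set.ncard_insert_le _ _).trans (by rw [Set.ncard_singleton])
  omega
end

section
/- Let G be a connected graph with n ≥ 3 vertices. Then any locally-optimal coloring of G uses at most ⌊n/3⌋ distinct colors. -/
theorem SimpleGraph.Connected.forall_of_adj_closed {V : Type*} {G : SimpleGraph V}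
    (hG : G.Connected) {p : V → Prop} (hp : ∀ u w, G.Adj u w → p u → p w) {u : V} (hu : p u)
    (w : V) : p w := by
  induction (G.reachable_iff_reflTransGen u w).mp (hG u w) with
  | refl => exact hu
  | tail _ hadj ih => exact hp _ _ hadj ih

namespace IsLocOpt

variable {V : Type*} {G : SimpleGraph V} {k : ℕ} {c : V → Fin k}

theorem two_le_card_adj_eq_of_adj_ne [Finite V] (hc : IsLocOpt G c) {v y : V} (hadj : G.Adj v y)
    (hne : c y ≠ c v) : 2 ≤ Nat.card {w : V // G.Adj v w ∧ c w = c v} := by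
  have : Nonempty {w : V // G.Adj v w ∧ c w = c y} := ⟨⟨y, hadj, rfl⟩⟩
  have hy : 0 < Nat.card {w : V // G.Adj v w ∧ c w = c y} := Nat.card_pos
  exact lt_of_le_of_lt hy (hc v (c y) hne)

theorem three_le_ncard_of_adj_ne [Finite V] (hc : IsLocOpt G c) {v y : V} (hadj : G.Adj v y)
    (hne : c y ≠ c v) : 3 ≤ {x | c x = c v}.ncard := by
  have hsub : insert v {w | G.Adj v w ∧ c w = c v} ⊆ {x | c x = c v} := by
    rintro x (rfl | ⟨-, hx⟩)
    exacts [rfl, hx]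
  have hv : v ∉ {w | G.Adj v w ∧ c w = c v} := fun h ↦ h.1.ne rfl
  calc 3 ≤ {w | G.Adj v w ∧ c w = c v}.ncard + 1 :=
        Nat.add_le_add_right (hc.two_le_card_adj_eq_of_adj_ne hadj hne) 1
    _ = (insert v {w | G.Adj v w ∧ c w = c v}).ncard := (Set.ncard_insert_of_notMem hv).symm
    _ ≤ {x | c x = c v}.ncard := Set.ncard_le_ncard hsub

theorem three_le_ncard [Finite V] (hc : IsLocOpt G c) (hG : G.Connected) (hV : 3 ≤ Nat.card V)
    (v : V) : 3 ≤ {x | c x = c v}.ncard := by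
  by_contra hsmall
  have hclosed : ∀ u w, G.Adj u w → c u = c v → c w = c v := by
    intro u w hadj hu
    by_contra hw
    exact hsmall (hu ▸ hc.three_le_ncard_of_adj_ne hadj (hu ▸ hw))
  have huniv : {x | c x = c v} = Set.univ :=
    Set.eq_univ_of_forall (hG.forall_of_adj_closed hclosed rfl)
  rw [huniv, Set.ncard_univ] at hsmall
  exact hsmall hV

end IsLocOpt

theorem stmt4_general {V : Type*} [Fintype V] (G : SimpleGraph V) {k : ℕ}
    (hconn : G.Connected) (hn : 3 ≤ Fintype.card V)
    (c : V → Fin k) (hc : IsLocOpt G c) :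
    (Finset.univ.image c).card ≤ Fintype.card V / 3 := by
  have hclass : ∀ d ∈ Finset.univ.image c, 3 ≤ (Finset.univ.filter (c · = d)).card := by
    rintro d hd
    obtain ⟨v, -, rfl⟩ := Finset.mem_image.mp hd
    have := hc.three_le_ncard hconn (Fintype.card_eq_nat_card ▸ hn) v
    rwa [← Set.ncard_coe_finset, Finset.coe_filter_univ]
  rw [Nat.le_div_iff_mul_le three_pos, mul_comm]
  exact Finset.mul_card_image_le_card _ 3 hclass

/-- A connected graph on `n ≥ 3` vertices admits at most `⌊n/3⌋` distinct
colors in any locally-optimal coloring. -/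
theorem stmt4 {V : Type*} [Fintype V] [DecidableEq V] (G : SimpleGraph V) {k : ℕ}
    (hconn : G.Connected) (hn : 3 ≤ Fintype.card V)
    (c : V → Fin k) (hc : IsLocOpt G c) :
    (Finset.univ.image c).card ≤ Fintype.card V / 3 :=
  stmt4_general G hconn hn c hc
end

section
/- Let G be a graph with an edge uw, and let G' be the graph obtained from G by subdividing the edge uw (replacing uw with a new vertex v and edges uv and vw). Then there is a bijection between the locally-optimal k-colorings of G' and the locally-optimal k-colorings c of G satisfying c(u) = c(w). In particular LO_k(G') equals the number of locally-optimal k-colorings of G with c(u) = c(w). -/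
/-- The graph obtained from `G` by subdividing the edge `uw`: replace `uw`
by a new vertex (the `Sum.inr` vertex) joined to `u` and `w`. -/
def subdiv {V : Type*} (G : SimpleGraph V) (u w : V) : SimpleGraph (V ⊕ Unit) :=
  SimpleGraph.fromRel fun x y =>
    match x, y with
    | Sum.inl a, Sum.inl b => G.Adj a b ∧ ¬((a = u ∧ b = w) ∨ (a = w ∧ b = u))
    | Sum.inl a, Sum.inr _ => a = u ∨ a = w
    | Sum.inr _, _ => False

open Sum

section Aux

variable {V : Type*}

lemma subdiv_adj_inl_inl (G : SimpleGraph V) (u w a b : V) :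
    (subdiv G u w).Adj (inl a) (inl b) ↔
      G.Adj a b ∧ ¬((a = u ∧ b = w) ∨ (a = w ∧ b = u)) := by
  simp only [subdiv, SimpleGraph.fromRel_adj, ne_eq, inl.injEq]
  constructor
  · rintro ⟨hne, h | h⟩
    · exact h
    · exact ⟨h.1.symm, fun hp => h.2 (by tauto)⟩
  · intro h
    exact ⟨h.1.ne, Or.inl h⟩

lemma subdiv_adj_inl_inr (G : SimpleGraph V) (u w a : V) (t : Unit) :
    (subdiv G u w).Adj (inl a) (inr t) ↔ a = u ∨ a = w := by
  simp [subdiv, SimpleGraph.fromRel_adj]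

lemma subdiv_adj_inr (G : SimpleGraph V) (u w : V) (t : Unit) (x : V ⊕ Unit) :
    (subdiv G u w).Adj (inr t) x ↔ x = inl u ∨ x = inl w := by
  cases x with
  | inl a =>
    rw [(subdiv G u w).adj_comm, subdiv_adj_inl_inr]
    simp [eq_comm]
  | inr s =>
    simp only [subdiv, SimpleGraph.fromRel_adj]
    simp

lemma count_eq [Fintype V] (G : SimpleGraph V) (u w : V) (huw : G.Adj u w) {k : ℕ}
    (c : V → Fin k) (hcw : c u = c w) (a : V) (d : Fin k) :
    Nat.card {x : V ⊕ Unit // (subdiv G u w).Adj (inl a) x ∧ Sum.elim c (fun _ => c u) x = d}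
      = Nat.card {b : V // G.Adj a b ∧ c b = d} := by
  classical
  rw [Nat.card_eq_fintype_card, Nat.card_eq_fintype_card, Fintype.card_subtype,
    Fintype.card_subtype]
  apply Finset.card_nbij' (i := Sum.elim id (fun _ => if a = u then w else u))
    (j := fun b => if (a = u ∧ b = w) ∨ (a = w ∧ b = u) then inr () else inl b)
  · rintro (b | t) hx <;> simp only [Finset.mem_coe, Finset.mem_filter, Finset.mem_univ, true_and] at hx ⊢
    · exact ⟨((subdiv_adj_inl_inl G u w a b).1 hx.1).1, hx.2⟩
    · rcases (subdiv_adj_inl_inr G u w a t).1 hx.1 with ha | ha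
      · rw [Sum.elim_inr, if_pos ha]
        exact ⟨by rw [ha]; exact huw, by rw [← hcw]; exact hx.2⟩
      · rw [Sum.elim_inr, if_neg (show ¬ a = u by rw [ha]; exact huw.ne')]
        exact ⟨by rw [ha]; exact huw.symm, hx.2⟩
  · intro b hb
    simp only [Finset.mem_coe, Finset.mem_filter, Finset.mem_univ, true_and] at hb ⊢
    split_ifs with h
    · refine ⟨(subdiv_adj_inl_inr G u w a ()).2 (by tauto), ?_⟩
      rcases h with ⟨_, hbw⟩ | ⟨_, hbu⟩
      · rw [Sum.elim_inr, hcw, ← hbw]; exact hb.2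
      · rw [Sum.elim_inr, ← hbu]; exact hb.2
    · exact ⟨(subdiv_adj_inl_inl G u w a b).2 ⟨hb.1, h⟩, hb.2⟩
  · rintro (b | t) hx <;> simp only [Finset.mem_coe, Finset.mem_filter, Finset.mem_univ, true_and] at hx
    · have := ((subdiv_adj_inl_inl G u w a b).1 hx.1).2
      simp [this]
    · rcases (subdiv_adj_inl_inr G u w a t).1 hx.1 with ha | ha
      · rw [Sum.elim_inr, if_pos ha]; beta_reduce; rw [if_pos (Or.inl ⟨ha, rfl⟩)]
      · rw [Sum.elim_inr, if_neg (show ¬ a = u by rw [ha]; exact huw.ne')]; beta_reduce; rw [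
          if_pos (Or.inr ⟨ha, rfl⟩)]
  · intro b hb
    simp only [Finset.mem_coe, Finset.mem_filter, Finset.mem_univ, true_and] at hb
    by_cases h : (a = u ∧ b = w) ∨ (a = w ∧ b = u)
    · beta_reduce; rw [if_pos h, Sum.elim_inr]
      rcases h with ⟨ha, hbw⟩ | ⟨ha, hbu⟩
      · rw [if_pos ha, hbw]
      · rw [if_neg (show ¬ a = u by rw [ha]; exact huw.ne'), hbu]
    · beta_reduce; rw [if_neg h, Sum.elim_inl, id]

/-- In a locally optimal coloring of the subdivision, the new vertex and both
endpoints of the subdivided edge get the same color. -/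
lemma inr_color [Fintype V] (G : SimpleGraph V) (u w : V) (huw : G.Adj u w) {k : ℕ}
    (c' : V ⊕ Unit → Fin k) (h : IsLocOpt (subdiv G u w) c') :
    c' (inl u) = c' (inr ()) ∧ c' (inl w) = c' (inr ()) := by
  have key : ∀ p q : V, (∀ x, (subdiv G u w).Adj (inr ()) x ↔ x = inl p ∨ x = inl q) →
      c' (inl p) = c' (inr ()) := by
    intro p q hadj
    by_contra hne
    have hlt := h (inr ()) (c' (inl p)) hne
    have h1 : 0 < Nat.card {x : V ⊕ Unit //
        (subdiv G u w).Adj (inr ()) x ∧ c' x = c' (inl p)} := by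
      have : Nonempty {x : V ⊕ Unit //
          (subdiv G u w).Adj (inr ()) x ∧ c' x = c' (inl p)} :=
        ⟨⟨inl p, (hadj (inl p)).2 (Or.inl rfl), rfl⟩⟩
      exact Nat.card_pos
    have h2 : Subsingleton {x : V ⊕ Unit //
        (subdiv G u w).Adj (inr ()) x ∧ c' x = c' (inr ())} := by
      constructor
      rintro ⟨x, hx1, hx2⟩ ⟨y, hy1, hy2⟩
      have hx : x = inl q := by
        rcases (hadj x).1 hx1 with rfl | rfl
        · exact absurd hx2 hne
        · rfl
      have hy : y = inl q := by
        rcases (hadj y).1 hy1 with rfl | rfl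
        · exact absurd hy2 hne
        · rfl
      exact Subtype.ext (hx.trans hy.symm)
    have h3 : Nat.card {x : V ⊕ Unit //
        (subdiv G u w).Adj (inr ()) x ∧ c' x = c' (inr ())} ≤ 1 := by
      rcases isEmpty_or_nonempty {x : V ⊕ Unit //
          (subdiv G u w).Adj (inr ()) x ∧ c' x = c' (inr ())} with he | hn
      · simp [Nat.card_of_isEmpty]
      · exact le_of_eq (Nat.card_unique)
    omega
  constructor
  · exact key u w (fun x => subdiv_adj_inr G u w () x)
  · refine key w u (fun x => ?_)
    rw [subdiv_adj_inr]
    tauto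

end Aux

/-- Subdividing an edge `uw` gives a graph whose locally-optimal `k`-colorings
biject with the locally-optimal `k`-colorings of `G` satisfying `c u = c w`;
in particular the counts agree. -/
theorem stmt5 {V : Type*} [Fintype V] (G : SimpleGraph V) (u w : V)
    (huw : G.Adj u w) (k : ℕ) :
    Nonempty ({c' : V ⊕ Unit → Fin k // IsLocOpt (subdiv G u w) c'} ≃
      {c : V → Fin k // IsLocOpt G c ∧ c u = c w}) ∧
    LOcount (subdiv G u w) k = Nat.card {c : V → Fin k // IsLocOpt G c ∧ c u = c w} := by
  -- forward direction
  have fwd : ∀ c' : V ⊕ Unit → Fin k, IsLocOpt (subdiv G u w) c' →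
      IsLocOpt G (c' ∘ inl) ∧ (c' ∘ inl) u = (c' ∘ inl) w := by
    intro c' h
    obtain ⟨hu, hw⟩ := inr_color G u w huw c' h
    have hcw : (c' ∘ inl) u = (c' ∘ inl) w := hu.trans hw.symm
    have heq : c' = Sum.elim (c' ∘ inl) (fun _ => (c' ∘ inl) u) := by
      funext x
      rcases x with b | t
      · rfl
      · cases t; exact hu.symm
    refine ⟨?_, hcw⟩
    intro a d hd
    have hlt := h (inl a) d (by simpa using hd)
    rw [heq] at hlt
    simp only [Sum.elim_inl] at hlt
    rwa [count_eq G u w huw _ hcw a d, count_eq G u w huw _ hcw a _] at hlt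
  -- backward direction
  have bwd : ∀ c : V → Fin k, IsLocOpt G c → c u = c w →
      IsLocOpt (subdiv G u w) (Sum.elim c (fun _ => c u)) := by
    intro c hc hcw v d hd
    rcases v with a | t
    · simp only [Sum.elim_inl] at hd ⊢
      rw [count_eq G u w huw c hcw a d, count_eq G u w huw c hcw a (c a)]
      exact hc a d hd
    · simp only [Sum.elim_inr] at hd ⊢
      have hzero : Nat.card {x : V ⊕ Unit //
          (subdiv G u w).Adj (inr t) x ∧ Sum.elim c (fun _ => c u) x = d} = 0 := by
        have : IsEmpty {x : V ⊕ Unit //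
            (subdiv G u w).Adj (inr t) x ∧ Sum.elim c (fun _ => c u) x = d} := by
          constructor
          rintro ⟨x, hx1, hx2⟩
          rcases (subdiv_adj_inr G u w t x).1 hx1 with rfl | rfl
          · exact hd (hx2.symm ▸ rfl)
          · exact hd (by rw [← hx2, Sum.elim_inl, ← hcw])
        exact Nat.card_of_isEmpty
      have hpos : 0 < Nat.card {x : V ⊕ Unit //
          (subdiv G u w).Adj (inr t) x ∧ Sum.elim c (fun _ => c u) x = c u} := by
        have : Nonempty {x : V ⊕ Unit //
            (subdiv G u w).Adj (inr t) x ∧ Sum.elim c (fun _ => c u) x = c u} :=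
          ⟨⟨inl u, (subdiv_adj_inr G u w t (inl u)).2 (Or.inl rfl), rfl⟩⟩
        exact Nat.card_pos
      omega
  -- the equivalence
  have e : {c' : V ⊕ Unit → Fin k // IsLocOpt (subdiv G u w) c'} ≃
      {c : V → Fin k // IsLocOpt G c ∧ c u = c w} :=
    { toFun := fun x => ⟨x.1 ∘ inl, fwd x.1 x.2⟩
      invFun := fun x => ⟨Sum.elim x.1 (fun _ => x.1 u), bwd x.1 x.2.1 x.2.2⟩
      left_inv := by
        rintro ⟨c', h⟩
        obtain ⟨hu, _⟩ := inr_color G u w huw c' h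
        apply Subtype.ext
        funext x
        rcases x with b | t
        · rfl
        · cases t; exact hu
      right_inv := by
        rintro ⟨c, hc⟩
        rfl }
  exact ⟨⟨e⟩, by rw [LOcount]; exact Nat.card_congr e⟩
end

section
/- Let G be a bivalent-dense graph (meaning a strict majority of the neighbors of each non-bivalent vertex are bivalent, where bivalent means degree two), and let I be the subgraph of G induced by the set of edges incident to at least one bivalent vertex. If I has p connected components, then LO_k(G) = k^p. -/
/-- The degree of a vertex, as the number of its neighbors. -/
noncomputable def deg {V : Type*} (G : SimpleGraph V) (v : V) : ℕ :=
  Nat.card {w : V // G.Adj v w}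

namespace SimpleGraph

variable {V β : Type*} {H : SimpleGraph V}

theorem Reachable.eq_of_forall_adj_eq {f : V → β} (hf : ∀ x y, H.Adj x y → f x = f y)
    {v w : V} (h : H.Reachable v w) : f v = f w := by
  obtain ⟨p⟩ := h
  induction p with
  | nil => rfl
  | cons hadj _ ih => exact (hf _ _ hadj).trans ih

def edgeConstEquivConnectedComponent (H : SimpleGraph V) (β : Type*) :
    {f : V → β // ∀ x y, H.Adj x y → f x = f y} ≃ (H.ConnectedComponent → β) where
  toFun f := Quot.lift f.1 fun _ _ => Reachable.eq_of_forall_adj_eq f.2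
  invFun g := ⟨g ∘ H.connectedComponentMk, fun _ _ h => by
    simp only [Function.comp_apply, ConnectedComponent.connectedComponentMk_eq_of_adj h]⟩
  left_inv _ := rfl
  right_inv g := funext <| ConnectedComponent.ind fun _ => rfl

theorem card_edgeConst [Finite V] (H : SimpleGraph V) (β : Type*) :
    Nat.card {f : V → β // ∀ x y, H.Adj x y → f x = f y} =
      Nat.card β ^ Nat.card H.ConnectedComponent := by
  rw [Nat.card_congr (edgeConstEquivConnectedComponent H β), Nat.card_fun]

theorem card_connectedComponent_induce_support (H : SimpleGraph V)
    (hsupp : ∀ v, ∃ w, H.Adj v w) :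
    Nat.card (H.induce {v | ∃ w, H.Adj v w}).ConnectedComponent =
      Nat.card H.ConnectedComponent := by
  rw [Set.eq_univ_of_forall hsupp]
  exact Nat.card_congr (induceUnivIso H).connectedComponentEquiv

end SimpleGraph

section LocOpt

variable {V α : Type*} [Finite V] {G : SimpleGraph V}

theorem card_adj_color_add_card_adj_color_le_deg (c : V → α) (v : V) {d e : α} (hde : d ≠ e) :
    Nat.card {w // G.Adj v w ∧ c w = d} + Nat.card {w // G.Adj v w ∧ c w = e} ≤ deg G v := by
  have hdisj : Disjoint {w | G.Adj v w ∧ c w = d} {w | G.Adj v w ∧ c w = e} :=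
    Set.disjoint_left.2 fun _ hd he => hde (hd.2.symm.trans he.2)
  have hsub : {w | G.Adj v w ∧ c w = d} ∪ {w | G.Adj v w ∧ c w = e} ⊆ {w | G.Adj v w} :=
    fun _ hw => hw.elim And.left And.left
  have := Set.ncard_le_ncard hsub
  rwa [Set.ncard_union_eq hdisj] at this

variable {k : ℕ} {c : V → Fin k}

theorem IsLocOpt.color_eq_of_adj_of_deg_le_two (hc : IsLocOpt G c) {v w : V}
    (hv : deg G v ≤ 2) (hadj : G.Adj v w) : c w = c v := by
  by_contra hne
  have hlt := hc v (c w) hne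
  have hpos : 0 < Nat.card {u // G.Adj v u ∧ c u = c w} :=
    have : Nonempty {u // G.Adj v u ∧ c u = c w} := ⟨⟨w, hadj, rfl⟩⟩
    Nat.card_pos
  have := card_adj_color_add_card_adj_color_le_deg (G := G) c v hne
  omega

theorem isLocOpt_of_majority
    (h : ∀ v, deg G v < 2 * Nat.card {w // G.Adj v w ∧ c w = c v}) : IsLocOpt G c := by
  intro v d hd
  have := card_adj_color_add_card_adj_color_le_deg (G := G) c v hd
  have := h v
  omega

end LocOpt

section BivalentDense

variable {V : Type*} {G I : SimpleGraph V}
  (hdense : ∀ v : V, deg G v ≠ 2 →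
    deg G v < 2 * Nat.card {w : V // G.Adj v w ∧ deg G w = 2})
  (hI : ∀ x y : V, I.Adj x y ↔ G.Adj x y ∧ (deg G x = 2 ∨ deg G y = 2))
include hdense hI

theorem exists_adj_of_bivalentDense (v : V) : ∃ w, I.Adj v w := by
  by_cases hv : deg G v = 2
  · obtain ⟨w, hw⟩ := Nat.card_pos_iff.mp (hv ▸ two_pos : 0 < deg G v) |>.1
    exact ⟨w, (hI v w).2 ⟨hw, .inl hv⟩⟩
  · have hpos : 0 < Nat.card {w // G.Adj v w ∧ deg G w = 2} := by
      have := hdense v hv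
      omega
    obtain ⟨w, hw, hw2⟩ := (Nat.card_pos_iff.mp hpos).1
    exact ⟨w, (hI v w).2 ⟨hw, .inr hw2⟩⟩

theorem isLocOpt_iff_forall_adj_eq [Finite V] {k : ℕ} (c : V → Fin k) :
    IsLocOpt G c ↔ ∀ x y, I.Adj x y → c x = c y := by
  refine ⟨fun hc x y hxy => ?_, fun hconst => isLocOpt_of_majority fun v => ?_⟩
  · obtain ⟨hadj, hx | hy⟩ := (hI x y).1 hxy
    · exact (hc.color_eq_of_adj_of_deg_le_two hx.le hadj).symm
    · exact hc.color_eq_of_adj_of_deg_le_two hy.le hadj.symm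
  · have hsame : ∀ w, G.Adj v w → (deg G v = 2 ∨ deg G w = 2) → c w = c v :=
      fun w hadj h => (hconst v w ((hI v w).2 ⟨hadj, h⟩)).symm
    by_cases hv : deg G v = 2
    · have : deg G v ≤ Nat.card {w // G.Adj v w ∧ c w = c v} :=
        Nat.card_mono (Set.toFinite _) fun w hw => ⟨hw, hsame w hw (.inl hv)⟩
      omega
    · have : Nat.card {w // G.Adj v w ∧ deg G w = 2} ≤ Nat.card {w // G.Adj v w ∧ c w = c v} :=
        Nat.card_mono (Set.toFinite _) fun w hw => ⟨hw.1, hsame w hw.1 (.inr hw.2)⟩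
      have := hdense v hv
      omega

end BivalentDense

/-- If `G` is bivalent-dense (a strict majority of the neighbors of every
non-bivalent vertex are bivalent) and `I`, the subgraph induced by the edges
incident to at least one bivalent vertex, has `p` connected components, then
`LO_k(G) = k^p`. -/
theorem stmt6 {V : Type*} [Fintype V] (G : SimpleGraph V) (k p : ℕ)
    (hdense : ∀ v : V, deg G v ≠ 2 →
      deg G v < 2 * Nat.card {w : V // G.Adj v w ∧ deg G w = 2})
    (I : SimpleGraph V)
    (hI : ∀ x y : V, I.Adj x y ↔ G.Adj x y ∧ (deg G x = 2 ∨ deg G y = 2))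
    (hp : Nat.card (SimpleGraph.ConnectedComponent
      (SimpleGraph.induce {v : V | ∃ w, I.Adj v w} I)) = p) :
    LOcount G k = k ^ p := by
  rw [LOcount, Nat.card_congr (Equiv.subtypeEquivRight (isLocOpt_iff_forall_adj_eq hdense hI)),
    I.card_edgeConst, Nat.card_fin, ← hp,
    I.card_connectedComponent_induce_support (exists_adj_of_bivalentDense hdense hI)]
end

section
/- For each d ≥ 1, there exists a connected graph G with exactly 3d vertices such that G admits a locally-optimal coloring using exactly d distinct colors (so the degree of LO_k(G) is exactly d, achieving the upper bound ⌊n/3⌋). One such graph is obtained by taking d disjoint triangles and connecting them in a path by single edges between triangles. -/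
open SimpleGraph

theorem isLocOpt_of_card_ne_le_one {V : Type*} [Finite V] {k : ℕ} {G : SimpleGraph V}
    {c : V → Fin k} (hsame : ∀ v, 1 < Nat.card {w // G.Adj v w ∧ c w = c v})
    (hother : ∀ v, Nat.card {w // G.Adj v w ∧ c w ≠ c v} ≤ 1) : IsLocOpt G c := by
  intro v e he
  calc Nat.card {w // G.Adj v w ∧ c w = e}
      ≤ Nat.card {w // G.Adj v w ∧ c w ≠ c v} :=
        Nat.card_le_card_of_injective _
          (Subtype.impEmbedding _ _ fun _ ⟨hadj, hc⟩ => ⟨hadj, hc ▸ he⟩).injective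
    _ < _ := (hother v).trans_lt (hsame v)

def triangleChain (d : ℕ) : SimpleGraph (Fin (3 * d)) :=
  fromRel fun v w => (v : ℕ) / 3 = w / 3 ∨ ((v : ℕ) % 3 = 2 ∧ (w : ℕ) = v + 1)

theorem triangleChain_adj {d : ℕ} {v w : Fin (3 * d)} :
    (triangleChain d).Adj v w ↔ v ≠ w ∧ ((v : ℕ) / 3 = w / 3 ∨
      ((v : ℕ) % 3 = 2 ∧ (w : ℕ) = v + 1) ∨ ((w : ℕ) % 3 = 2 ∧ (v : ℕ) = w + 1)) := by
  rw [triangleChain, fromRel_adj]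
  omega

theorem pathGraph_le_triangleChain (d : ℕ) : pathGraph (3 * d) ≤ triangleChain d := by
  intro v w h
  rw [pathGraph_adj] at h
  rw [triangleChain_adj, ne_eq, Fin.ext_iff]
  omega

theorem triangleChain_connected {d : ℕ} (hd : 1 ≤ d) : (triangleChain d).Connected := by
  obtain ⟨n, hn⟩ : ∃ n, 3 * d = n + 1 := ⟨3 * d - 1, by omega⟩
  have hpath : (pathGraph (3 * d)).Connected := hn ▸ pathGraph_connected n
  exact hpath.mono (pathGraph_le_triangleChain d)

def triangleIndex {d : ℕ} (v : Fin (3 * d)) : Fin d :=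
  ⟨v / 3, by omega⟩

theorem triangleIndex_eq_iff {d : ℕ} {v w : Fin (3 * d)} :
    triangleIndex w = triangleIndex v ↔ (w : ℕ) / 3 = v / 3 := by
  simp [triangleIndex, Fin.ext_iff]

theorem triangleIndex_surjective (d : ℕ) : Function.Surjective (triangleIndex (d := d)) :=
  fun t => ⟨⟨3 * t, by omega⟩, Fin.ext (by simp [triangleIndex])⟩

theorem one_lt_card_triangleChain_adj_triangleIndex_eq {d : ℕ} (v : Fin (3 * d)) :
    1 < Nat.card {w // (triangleChain d).Adj v w ∧ triangleIndex w = triangleIndex v} := by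
  rw [Finite.one_lt_card_iff_nontrivial]
  have hv := v.isLt
  let mate (i : Fin 2) : {w // (triangleChain d).Adj v w ∧ triangleIndex w = triangleIndex v} :=
    ⟨⟨3 * (v / 3) + (v % 3 + i + 1) % 3, by omega⟩, by
      rw [triangleChain_adj, triangleIndex_eq_iff, ne_eq, Fin.ext_iff]
      have := i.isLt
      simp only
      omega⟩
  refine nontrivial_of_ne (mate 0) (mate 1) fun h => ?_
  have h' := congrArg (fun w => (w.1 : ℕ)) h
  simp only [mate] at h'
  omega

theorem card_triangleChain_adj_triangleIndex_ne_le_one {d : ℕ} (v : Fin (3 * d)) :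
    Nat.card {w // (triangleChain d).Adj v w ∧ triangleIndex w ≠ triangleIndex v} ≤ 1 := by
  rw [Finite.card_le_one_iff_subsingleton]
  refine ⟨?_⟩
  rintro ⟨w₁, hadj₁, hne₁⟩ ⟨w₂, hadj₂, hne₂⟩
  rw [triangleChain_adj] at hadj₁ hadj₂
  rw [ne_eq, triangleIndex_eq_iff] at hne₁ hne₂
  exact Subtype.ext (Fin.ext (show (w₁ : ℕ) = w₂ by omega))

theorem isLocOpt_triangleChain_triangleIndex (d : ℕ) :
    IsLocOpt (triangleChain d) triangleIndex :=
  isLocOpt_of_card_ne_le_one one_lt_card_triangleChain_adj_triangleIndex_eq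
    card_triangleChain_adj_triangleIndex_ne_le_one

/-- For each `d ≥ 1` there is a connected graph on `3d` vertices admitting a
locally-optimal coloring using exactly `d` distinct colors, achieving the
`⌊n/3⌋` upper bound. -/
theorem stmt12 (d : ℕ) (hd : 1 ≤ d) :
    ∃ G : SimpleGraph (Fin (3 * d)), G.Connected ∧
      ∃ c : Fin (3 * d) → Fin d, IsLocOpt G c ∧ Function.Surjective c :=
  ⟨triangleChain d, triangleChain_connected hd, triangleIndex,
    isLocOpt_triangleChain_triangleIndex d, triangleIndex_surjective d⟩
end

section
/- Let G be the graph consisting of 5 disjoint 5-cliques arranged in a cycle, where each clique has one 'exterior' vertex of degree 4 and four 'interior' vertices of degree 8, and each pair of cyclically adjacent cliques is joined by four edges such that each interior vertex has two edges to each neighboring clique (the four between-clique edges between adjacent cliques connect two pairs of interior vertices, with each interior vertex's four between-clique edges going to the two adjacent cliques). Then in any locally-optimal coloring of G, each 5-clique is monochromatic. -/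
/-- Five 5-cliques (indexed by `ZMod 5`, with vertex `0` of each clique the
"exterior" vertex) arranged in a cycle: between consecutive cliques `i` and
`i+1`, the interior pair `{1,2}` of one clique is completely joined to the
interior pair `{3,4}` of the other, giving every interior vertex two edges to
each of the two neighboring cliques. -/
def G7 : SimpleGraph (ZMod 5 × Fin 5) :=
  SimpleGraph.fromRel fun x y =>
    (x.1 = y.1 ∧ x.2 ≠ y.2) ∨
    (y.1 = x.1 + 1 ∧
      ((x.2 ∈ ({1, 2} : Finset (Fin 5)) ∧ y.2 ∈ ({3, 4} : Finset (Fin 5))) ∨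
       (x.2 ∈ ({3, 4} : Finset (Fin 5)) ∧ y.2 ∈ ({1, 2} : Finset (Fin 5)))))

open Finset

section LocallyOptimal

variable {V : Type*} {k : ℕ} {G : SimpleGraph V} {c : V → Fin k}

lemma card_adj_color_eq_card_filter {v : V} {s : Finset V} (hN : ∀ w, G.Adj v w ↔ w ∈ s)
    (d : Fin k) : Nat.card {w // G.Adj v w ∧ c w = d} = #{w ∈ s | c w = d} := by
  rw [← Nat.card_eq_finsetCard]
  exact Nat.card_congr (Equiv.subtypeEquivRight fun w => by simp [hN])

variable [DecidableEq V]

lemma IsLocOpt.color_eq_of_card_le (hc : IsLocOpt G c) {v : V} {s t : Finset V} {q : Fin k}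
    (hN : ∀ w, G.Adj v w ↔ w ∈ s ∪ t) (hs : ∀ w ∈ s, c w = q) (hts : #t ≤ #s) : c v = q := by
  by_contra hne
  have hlt := hc v q (Ne.symm hne)
  rw [card_adj_color_eq_card_filter hN, card_adj_color_eq_card_filter hN] at hlt
  have hq : #s ≤ #{w ∈ s ∪ t | c w = q} :=
    card_le_card fun w hw => mem_filter.2 ⟨mem_union_left _ hw, hs w hw⟩
  have hv : {w ∈ s ∪ t | c w = c v} ⊆ t := fun w hw => by
    obtain ⟨hw, hcw⟩ := mem_filter.1 hw
    exact (mem_union.1 hw).resolve_left fun hws => hne ((hs w hws).symm.trans hcw).symm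
  have := card_le_card hv
  omega

/- Read `x` as an exterior vertex, `v` an interior vertex of its clique, `S` the other interior
vertices and `O` the outside neighbours of `v`. Plurality at `x` gives at least two more vertices of
colour `c x` than of colour `c v` in `S`; plurality at `v` then needs all of `O`, and leaves room in
`S` for neither a third `c x` nor a `c v`. -/
lemma IsLocOpt.eq_on_outer_and_exists_third_color (hc : IsLocOpt G c) {x v : V} {S O : Finset V}
    (hx : ∀ w, G.Adj x w ↔ w ∈ insert v S) (hv : ∀ w, G.Adj v w ↔ w ∈ insert x (S ∪ O))
    (hS : #S = 3) (hO : #O ≤ 4) (hne : c v ≠ c x) :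
    (∀ w ∈ O, c w = c v) ∧ ∃ w ∈ S, c w ≠ c x ∧ c w ≠ c v := by
  have hvS : v ∉ S := fun h => G.irrefl ((hv v).2 (mem_insert_of_mem (mem_union_left _ h)))
  have hxS : x ∉ S := fun h => G.irrefl ((hx x).2 (mem_insert_of_mem h))
  have hX := hc x (c v) hne
  have hV := hc v (c x) hne.symm
  rw [card_adj_color_eq_card_filter hx, card_adj_color_eq_card_filter hx, filter_insert,
    if_pos rfl, card_insert_of_notMem fun h => hvS (mem_filter.1 h).1, filter_insert,
    if_neg hne] at hX
  rw [card_adj_color_eq_card_filter hv, card_adj_color_eq_card_filter hv] at hV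
  have hVx : #{w ∈ S | c w = c x} + 1 ≤ #{w ∈ insert x (S ∪ O) | c w = c x} := by
    rw [← card_insert_of_notMem fun h => hxS (mem_filter.1 h).1]
    refine card_le_card (insert_subset (mem_filter.2 ⟨mem_insert_self _ _, rfl⟩) ?_)
    exact filter_subset_filter _ ((subset_union_left).trans (subset_insert _ _))
  have hVv : #{w ∈ insert x (S ∪ O) | c w = c v} ≤ #{w ∈ S | c w = c v} + #{w ∈ O | c w = c v} := by
    rw [filter_insert, if_neg hne.symm, filter_union]
    exact card_union_le _ _
  have hOv : #{w ∈ O | c w = c v} ≤ #O := card_filter_le _ _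
  have hSxv : #({w ∈ S | c w = c x} ∪ {w ∈ S | c w = c v}) =
      #{w ∈ S | c w = c x} + #{w ∈ S | c w = c v} :=
    card_union_of_disjoint (disjoint_filter_filter' _ _ fun p hpx hpv w hw =>
      hne ((hpv w hw).symm.trans (hpx w hw)))
  have hSS : #({w ∈ S | c w = c x} ∪ {w ∈ S | c w = c v}) ≤ #S :=
    card_le_card (union_subset (filter_subset _ _) (filter_subset _ _))
  refine ⟨(card_filter_eq_iff (s := O)).1 (by omega), ?_⟩
  obtain ⟨w, hwS, hw⟩ := exists_mem_notMem_of_card_lt_card (s := {w ∈ S | c w = c x} ∪ {w ∈ S | c w = c v}) (t := S) (by omega)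
  simp only [mem_union, mem_filter, not_or, not_and] at hw
  exact ⟨w, hwS, hw.1 hwS, hw.2 hwS⟩

end LocallyOptimal

instance : DecidableRel G7.Adj := fun x y =>
  decidable_of_iff _ (SimpleGraph.fromRel_adj _ x y).symm

namespace G7

/-- The interior positions of both neighbouring cliques that interior position `a` is joined to
(meaningless for `a = 0`). -/
def across (a : Fin 5) : Finset (Fin 5) := if a ≤ 2 then {3, 4} else {1, 2}

lemma adj_exterior (i : ZMod 5) (w : ZMod 5 × Fin 5) :
    G7.Adj (i, 0) w ↔ w ∈ ({i} ×ˢ {0}ᶜ : Finset (ZMod 5 × Fin 5)) := by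
  revert i w; decide

lemma adj_interior (i : ZMod 5) {a : Fin 5} (ha : a ≠ 0) (w : ZMod 5 × Fin 5) :
    G7.Adj (i, a) w ↔ w ∈ insert (i, 0) (({i} : Finset (ZMod 5)) ×ˢ {0, a}ᶜ ∪ ({i + 1, i - 1} : Finset (ZMod 5)) ×ˢ across a) := by
  revert i a w; decide

lemma adj_exterior_iff_mem_insert (i : ZMod 5) {a : Fin 5} (ha : a ≠ 0) (w : ZMod 5 × Fin 5) :
    G7.Adj (i, 0) w ↔ w ∈ insert (i, a) (({i} : Finset (ZMod 5)) ×ˢ {0, a}ᶜ) := by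
  revert i a w; decide

lemma card_across (a : Fin 5) : #(across a) = 2 := by
  revert a; decide

lemma across_union {a b : Fin 5} (ha : a ≠ 0) (hb : b ≠ 0) (hab : across a ≠ across b) :
    across a ∪ across b = {0}ᶜ := by
  revert a b; decide

lemma card_clique_erase (i : ZMod 5) {a : Fin 5} (ha : a ≠ 0) :
    #(({i} : Finset (ZMod 5)) ×ˢ ({0, a}ᶜ : Finset (Fin 5))) = 3 := by
  revert i a; decide

lemma card_outer_le (i : ZMod 5) (a : Fin 5) :
    #(({i + 1, i - 1} : Finset (ZMod 5)) ×ˢ across a) ≤ 4 := by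
  revert i a; decide

variable {k : ℕ} {c : ZMod 5 × Fin 5 → Fin k}

lemma eq_on_outer_and_exists_third_color (hc : IsLocOpt G7 c) {i : ZMod 5} {a : Fin 5}
    (hne : c (i, a) ≠ c (i, 0)) :
    (∀ w ∈ ({i + 1, i - 1} : Finset (ZMod 5)) ×ˢ across a, c w = c (i, a)) ∧
      ∃ b, b ≠ 0 ∧ b ≠ a ∧ c (i, b) ≠ c (i, 0) ∧ c (i, b) ≠ c (i, a) := by
  have ha : a ≠ 0 := by rintro rfl; exact hne rfl
  obtain ⟨hO, ⟨j, b⟩, hb, hbx, hba⟩ := hc.eq_on_outer_and_exists_third_color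
    (adj_exterior_iff_mem_insert i ha) (adj_interior i ha) (card_clique_erase i ha)
    (card_outer_le i a) hne
  simp only [mem_product, mem_singleton, mem_compl, mem_insert, not_or] at hb
  obtain ⟨rfl, hb0, hba'⟩ := hb
  exact ⟨hO, b, hb0, hba', hbx, hba⟩

lemma color_eq_exterior (hc : IsLocOpt G7 c) (i : ZMod 5) (a : Fin 5) : c (i, a) = c (i, 0) := by
  by_contra hne
  obtain ⟨hOa, b, hb, hba, hbx, hcba⟩ := eq_on_outer_and_exists_third_color hc hne
  have hOb := (eq_on_outer_and_exists_third_color hc hbx).1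
  have ha : a ≠ 0 := by rintro rfl; exact hne rfl
  have hnext : ({i + 1} : Finset (ZMod 5)) ⊆ {i + 1, i - 1} := by simp
  by_cases hab : across a = across b
  · obtain ⟨p, hp⟩ : (across a).Nonempty := card_pos.1 (by rw [card_across]; norm_num)
    have hpa := hOa (i + 1, p) (mem_product.2 ⟨by simp, hp⟩)
    have hpb := hOb (i + 1, p) (mem_product.2 ⟨by simp, hab ▸ hp⟩)
    exact hcba (hpb.symm.trans hpa)
  · have hN : ∀ w, G7.Adj (i + 1, 0) w ↔
        w ∈ ({i + 1} : Finset (ZMod 5)) ×ˢ across a ∪ ({i + 1} : Finset (ZMod 5)) ×ˢ across b := by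
      rw [← product_union, across_union ha hb hab]
      exact adj_exterior (i + 1)
    have hca := hc.color_eq_of_card_le hN
      (fun w hw => hOa w (product_subset_product_left hnext hw)) (by simp [card_across])
    have hcb := hc.color_eq_of_card_le (by simpa only [union_comm] using hN)
      (fun w hw => hOb w (product_subset_product_left hnext hw)) (by simp [card_across])
    exact hcba (hcb.symm.trans hca)

end G7

/-- In any locally-optimal coloring of the graph `G7`, each 5-clique is
monochromatic. -/
theorem stmt15 (k : ℕ) (c : ZMod 5 × Fin 5 → Fin k) (hc : IsLocOpt G7 c) :
    ∀ i : ZMod 5, ∀ j j' : Fin 5, c (i, j) = c (i, j') := fun i j j' =>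
  (G7.color_eq_exterior hc i j).trans (G7.color_eq_exterior hc i j').symm
end
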